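/- For each integer n ≥ 0 and real (or complex) α and x, the higher-order Euler polynomial satisfies E_n^{(α)}(x) = Σ_{k=0}^{n} C(n,k) · [Σ_{i=0}^{k} ⟨−α⟩_i · S(k,i)/2^i] · x^{n−k}. -/

import Mathlib

open Finset

/-- Stirling numbers of the second kind `S(n,k)`. -/
def stirling : ℕ → ℕ → ℕ
  | 0, 0 => 1
  | 0, _ + 1 => 0
  | _ + 1, 0 => 0
  | n + 1, k + 1 => (k + 1) * stirling n (k + 1) + stirling n k

/-- The falling factorial `⟨x⟩_i = x (x-1) ⋯ (x-i+1)`, with `⟨x⟩_0 = 1`. -/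
def fallingFac (x : ℝ) (i : ℕ) : ℝ := ∏ k ∈ Finset.range i, (x - k)

/-- The function `(e^t - 1)/t`, extended by the value `1` at `t = 0`. -/
noncomputable def expm1Div (t : ℝ) : ℝ := if t = 0 then 1 else (Real.exp t - 1) / t

/-- The higher-order Bernoulli polynomial `B_n^{(α)}(x)`, defined via the generating
function `(t/(eᵗ-1))^α e^{xt} = ∑ B_n^{(α)}(x) tⁿ/n!`, i.e. as the `n`-th derivative
of `((eᵗ-1)/t)^{-α} e^{xt}` at `t = 0`. -/
noncomputable def higherBernoulli (n : ℕ) (α x : ℝ) : ℝ :=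
  iteratedDeriv n (fun t => expm1Div t ^ (-α) * Real.exp (x * t)) 0

/-- The higher-order Euler polynomial `E_n^{(α)}(x)`, defined via the generating
function `(2/(eᵗ+1))^α e^{xt} = ∑ E_n^{(α)}(x) tⁿ/n!`. -/
noncomputable def higherEuler (n : ℕ) (α x : ℝ) : ℝ :=
  iteratedDeriv n (fun t => ((Real.exp t + 1) / 2) ^ (-α) * Real.exp (x * t)) 0


/-! Writing `b(t) = (eᵗ + 1)/2`, the generating function `F_α(t) = b(t)^{-α} e^{xt}` satisfies
`F_α' = (x - α) F_α + (α/2) F_{α+1}` because `b' = b - 1/2`; taking `n`-th derivatives at `0`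
gives `E_{n+1}^{(α)}(x) = (x - α) E_n^{(α)}(x) + (α/2) E_n^{(α+1)}(x)`. The right-hand side of the
closed form is the Appell sum `∑ C(n,k) c_k(α) x^{n-k}` of the coefficients
`c_k(α) = ∑ ⟨-α⟩_i S(k,i)/2^i`, and the Stirling recurrence together with
`⟨-α⟩_{i+1} = ⟨-α⟩_i (-α - i) = -α ⟨-α-1⟩_i` shows that it obeys the same recurrence in `n`,
with the same initial value `1`. -/

theorem stirling_eq_stirlingSecond : ∀ n k, stirling n k = Nat.stirlingSecond n k
  | 0, 0 | 0, _ + 1 | _ + 1, 0 => rfl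
  | n + 1, k + 1 => by
    rw [stirling, Nat.stirlingSecond_succ_succ, stirling_eq_stirlingSecond n (k + 1),
      stirling_eq_stirlingSecond n k]

theorem sum_range_stirlingSecond_succ_mul {R : Type*} [CommSemiring R] (a : ℕ → R) (k : ℕ) :
    ∑ i ∈ range (k + 2), (Nat.stirlingSecond (k + 1) i : R) * a i =
      ∑ i ∈ range (k + 1), (Nat.stirlingSecond k i : R) * (i * a i + a (i + 1)) := by
  set g : ℕ → R := fun i => i * Nat.stirlingSecond k i * a i
  have shifted : ∑ i ∈ range (k + 1), g (i + 1) = ∑ i ∈ range (k + 1), g i := calc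
    _ = ∑ i ∈ range (k + 1), g (i + 1) + g 0 := by simp [g]
    _ = ∑ i ∈ range (k + 1), g i + g (k + 1) := by rw [← sum_range_succ', sum_range_succ]
    _ = _ := by simp [g, Nat.stirlingSecond_eq_zero_of_lt (Nat.lt_succ_self k)]
  rw [sum_range_succ', Nat.stirlingSecond_succ_zero, Nat.cast_zero, zero_mul, add_zero]
  calc _ = ∑ i ∈ range (k + 1), (g (i + 1) + Nat.stirlingSecond k i * a (i + 1)) :=
        sum_congr rfl fun i _ => by simp only [g, Nat.stirlingSecond_succ_succ]; push_cast; ring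
    _ = ∑ i ∈ range (k + 1), (g i + Nat.stirlingSecond k i * a (i + 1)) := by
        rw [sum_add_distrib, sum_add_distrib, shifted]
    _ = _ := sum_congr rfl fun i _ => by simp only [g]; ring

theorem fallingFac_succ_right (x : ℝ) (i : ℕ) : fallingFac x (i + 1) = fallingFac x i * (x - i) :=
  prod_range_succ _ _

theorem fallingFac_succ_left (x : ℝ) (i : ℕ) :
    fallingFac x (i + 1) = x * fallingFac (x - 1) i := by
  rw [fallingFac, prod_range_succ', fallingFac, mul_comm]
  simp only [Nat.cast_add, Nat.cast_one, Nat.cast_zero, sub_zero, sub_add_eq_sub_sub_swap]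

noncomputable def eulerCoeff (k : ℕ) (α : ℝ) : ℝ :=
  ∑ i ∈ range (k + 1), fallingFac (-α) i * (stirling k i : ℝ) / 2 ^ i

theorem eulerCoeff_zero (α : ℝ) : eulerCoeff 0 α = 1 := by
  simp [eulerCoeff, fallingFac, stirling]

theorem eulerCoeff_succ (k : ℕ) (α : ℝ) :
    eulerCoeff (k + 1) α = -α * eulerCoeff k α + α / 2 * eulerCoeff k (α + 1) := by
  have h := sum_range_stirlingSecond_succ_mul (fun i => fallingFac (-α) i / 2 ^ i) k
  simp only [eulerCoeff, stirling_eq_stirlingSecond, mul_sum, ← sum_add_distrib]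
  convert h using 1
  · exact sum_congr rfl fun i _ => by ring
  refine sum_congr rfl fun i _ => ?_
  have hl := fallingFac_succ_left (-α) i
  have hr := fallingFac_succ_right (-α) i
  rw [show -α - 1 = -(α + 1) by ring] at hl
  linear_combination ((Nat.stirlingSecond k i : ℝ) / 2 ^ (i + 1)) * hl -
    ((Nat.stirlingSecond k i : ℝ) / 2 ^ i) * hr

section Appell

variable {R : Type*} [CommSemiring R]

def appellSum (c : ℕ → R) (x : R) (n : ℕ) : R :=
  ∑ k ∈ range (n + 1), (n.choose k : R) * c k * x ^ (n - k)

theorem appellSum_zero (c : ℕ → R) (x : R) : appellSum c x 0 = c 0 := by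
  simp [appellSum]

theorem appellSum_succ (c : ℕ → R) (x : R) (n : ℕ) :
    appellSum c x (n + 1) = x * appellSum c x n + appellSum (fun k => c (k + 1)) x n := by
  have h := sum_choose_succ_mul (fun i j => c i * x ^ j) n
  simp only [← mul_assoc] at h
  rw [appellSum, h, appellSum, appellSum, mul_sum]
  congr 1
  refine sum_congr rfl fun k hk => ?_
  rw [Nat.sub_add_comm (mem_range_succ_iff.mp hk), pow_succ]
  ring

theorem appellSum_add (c d : ℕ → R) (x : R) (n : ℕ) :
    appellSum (fun k => c k + d k) x n = appellSum c x n + appellSum d x n := by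
  simp only [appellSum, ← sum_add_distrib]
  exact sum_congr rfl fun k _ => by ring

theorem appellSum_const_mul (a : R) (c : ℕ → R) (x : R) (n : ℕ) :
    appellSum (fun k => a * c k) x n = a * appellSum c x n := by
  simp only [appellSum, mul_sum]
  exact sum_congr rfl fun k _ => by ring

end Appell

noncomputable def eulerGenFun (α x t : ℝ) : ℝ :=
  ((Real.exp t + 1) / 2) ^ (-α) * Real.exp (x * t)

theorem contDiff_eulerGenFun (α x : ℝ) (n : ℕ∞) : ContDiff ℝ n (eulerGenFun α x) := by
  refine ContDiff.mul ?_ (by fun_prop)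
  exact ContDiff.rpow_const_of_ne (by fun_prop) fun t => by positivity

theorem hasDerivAt_eulerGenFun (α x t : ℝ) :
    HasDerivAt (eulerGenFun α x)
      ((x - α) * eulerGenFun α x t + α / 2 * eulerGenFun (α + 1) x t) t := by
  have hb : 0 < (Real.exp t + 1) / 2 := by positivity
  have hpow : HasDerivAt (fun s => ((Real.exp s + 1) / 2) ^ (-α))
      (Real.exp t / 2 * (-α) * ((Real.exp t + 1) / 2) ^ (-α - 1)) t :=
    (((Real.hasDerivAt_exp t).add_const 1).div_const 2).rpow_const (Or.inl hb.ne')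
  have hexp : HasDerivAt (fun s => Real.exp (x * s)) (Real.exp (x * t) * x) t :=
    (Real.hasDerivAt_exp _).comp t ((hasDerivAt_id t).const_mul x |>.congr_deriv (mul_one x))
  have hsplit : ((Real.exp t + 1) / 2) ^ (-α) =
      ((Real.exp t + 1) / 2) ^ (-α - 1) * ((Real.exp t + 1) / 2) := by
    rw [← Real.rpow_add_one hb.ne', sub_add_cancel]
  refine (hpow.mul hexp).congr_deriv ?_
  simp only [eulerGenFun, show -(α + 1) = -α - 1 by ring, hsplit]
  ring

theorem higherEuler_eq_iteratedDeriv (n : ℕ) (α x : ℝ) :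
    higherEuler n α x = iteratedDeriv n (eulerGenFun α x) 0 := rfl

theorem higherEuler_zero (α x : ℝ) : higherEuler 0 α x = 1 := by
  simp [higherEuler]

theorem higherEuler_succ (n : ℕ) (α x : ℝ) :
    higherEuler (n + 1) α x = (x - α) * higherEuler n α x + α / 2 * higherEuler n (α + 1) x := by
  have hderiv : deriv (eulerGenFun α x) =
      fun t => (x - α) * eulerGenFun α x t + α / 2 * eulerGenFun (α + 1) x t :=
    funext fun t => (hasDerivAt_eulerGenFun α x t).deriv
  have hsmooth (β : ℝ) := (contDiff_eulerGenFun β x n).contDiffAt (x := 0)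
  rw [higherEuler_eq_iteratedDeriv, iteratedDeriv_succ', hderiv,
    iteratedDeriv_fun_add (contDiffAt_const.mul (hsmooth α)) (contDiffAt_const.mul (hsmooth _)),
    iteratedDeriv_const_mul_field, iteratedDeriv_const_mul_field]
  rfl

theorem higherEuler_closed_form (n : ℕ) (α x : ℝ) :
    higherEuler n α x =
      ∑ k ∈ Finset.range (n + 1), (n.choose k : ℝ) *
        (∑ i ∈ Finset.range (k + 1), fallingFac (-α) i * (stirling k i : ℝ) / 2 ^ i) *
        x ^ (n - k) := by
  show higherEuler n α x = appellSum (fun k => eulerCoeff k α) x n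
  induction n generalizing α with
  | zero => rw [higherEuler_zero, appellSum_zero, eulerCoeff_zero]
  | succ n ih =>
    simp only [higherEuler_succ, ih, appellSum_succ, eulerCoeff_succ, appellSum_add,
      appellSum_const_mul]
    ring
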